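/- (Volume bound for the intersection of two transverse tubes, as in (4.22).) There is an absolute constant C such that if T₁, T₂ ⊂ ℝ³ are solid (possibly infinite) circular cylinders of radius r > 0 whose axes are lines with direction vectors making an angle θ ∈ (0, π/2], then the Lebesgue measure of T₁ ∩ T₂ is at most C r³ / sin θ. -/

import Mathlib

/-!
Let `v` be the component of `u₁` orthogonal to `u₂`, so `‖v‖ = sin θ` and `⟪v, u₁⟫ = ‖v‖²`.
On `T₂` the functional `⟪v, · - p₂⟫` is at most `r ‖v‖` in absolute value, while along `T₁` it
grows like `‖v‖²` times the axial coordinate, up to an error `r ‖v‖`. Hence on `T₁ ∩ T₂` the axial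
coordinate of `T₁` ranges over an interval of length `4 r / sin θ`; the two transverse coordinates
range over `[-r, r]`, so `T₁ ∩ T₂` lies in a box of volume `16 r³ / sin θ`.
-/

open MeasureTheory Real
open scoped ENNReal RealInnerProductSpace

noncomputable section

abbrev E3 := EuclideanSpace ℝ (Fin 3)

/-- The (infinite) solid circular cylinder of radius `r` about the line through `p`
with unit direction `u`: all points at distance at most `r` from that line. -/
def solidCylinder (p u : E3) (r : ℝ) : Set E3 :=
  {x | ‖(x - p) - (inner ℝ (x - p) u : ℝ) • u‖ ≤ r}

section InnerProductSpace

variable {E : Type*} [NormedAddCommGroup E] [InnerProductSpace ℝ E]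

theorem exists_orthonormalBasis_apply_zero_eq [FiniteDimensional ℝ E] {n : ℕ}
    (hn : Module.finrank ℝ E = n + 1) {u : E} (hu : ‖u‖ = 1) :
    ∃ b : OrthonormalBasis (Fin (n + 1)) ℝ E, b 0 = u := by
  have hu' : Orthonormal ℝ (({0} : Set (Fin (n + 1))).domRestrict fun _ ↦ u) :=
    orthonormal_subsingleton_iff.2 fun _ ↦ hu
  obtain ⟨b, hb⟩ := hu'.exists_orthonormalBasis_extension_of_card_eq (by simpa using hn)
  exact ⟨b, hb 0 rfl⟩

theorem inner_sub_inner_smul_eq_zero_of_norm_eq_one {u : E} (hu : ‖u‖ = 1) (w : E) :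
    ⟪w - ⟪w, u⟫ • u, u⟫ = 0 := by
  rw [inner_sub_left, real_inner_smul_left, real_inner_self_eq_norm_sq, hu]; ring

theorem inner_sub_inner_smul_left_eq_norm_sq_of_norm_eq_one {u : E} (hu : ‖u‖ = 1) (w : E) :
    ⟪w - ⟪w, u⟫ • u, w⟫ = ‖w - ⟪w, u⟫ • u‖ ^ 2 := by
  calc ⟪w - ⟪w, u⟫ • u, w⟫ = ⟪w - ⟪w, u⟫ • u, (w - ⟪w, u⟫ • u) + ⟪w, u⟫ • u⟫ := by
        rw [sub_add_cancel]
    _ = ‖w - ⟪w, u⟫ • u‖ ^ 2 := by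
        rw [inner_add_right, real_inner_smul_right,
          inner_sub_inner_smul_eq_zero_of_norm_eq_one hu, real_inner_self_eq_norm_sq,
          mul_zero, add_zero]

theorem OrthonormalBasis.volume_setOf_abs_inner_sub_le {ι : Type*} [Fintype ι]
    [FiniteDimensional ℝ E] [MeasurableSpace E] [BorelSpace E]
    (b : OrthonormalBasis ι ℝ E) (p : E) (a : ι → ℝ) :
    volume {x | ∀ i, |⟪b i, x - p⟫| ≤ a i} = ∏ i, ENNReal.ofReal (2 * a i) := by
  have hset : {x | ∀ i, |⟪b i, x - p⟫| ≤ a i} = (fun x ↦ b.repr (x - p)) ⁻¹'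
      (WithLp.ofLp ⁻¹' Set.univ.pi fun i ↦ Set.Icc (-a i) (a i)) := by
    ext x
    simp only [Set.mem_ofPred_eq, Set.mem_preimage, Set.mem_univ_pi, Set.mem_Icc,
      b.repr_apply_apply, abs_le]
  have hmp : MeasurePreserving (fun x ↦ b.repr (x - p)) :=
    b.measurePreserving_repr.comp (measurePreserving_sub_right volume p)
  rw [hset, hmp.measure_preimage, (PiLp.volume_preserving_ofLp ι).measure_preimage, volume_pi_pi]
  · simp [Real.volume_Icc, two_mul]
  · exact (MeasurableSet.univ_pi fun _ ↦ measurableSet_Icc).nullMeasurableSet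
  · exact ((MeasurableSet.univ_pi fun _ ↦ measurableSet_Icc).preimage
      (WithLp.measurable_ofLp 2 _)).nullMeasurableSet

end InnerProductSpace

theorem abs_inner_sub_le_of_mem_solidCylinder {p u x : E3} {r : ℝ}
    (hx : x ∈ solidCylinder p u r) (e : E3) :
    |⟪e, x - p⟫ - ⟪e, u⟫ * ⟪x - p, u⟫| ≤ r * ‖e‖ := by
  have h : ⟪e, (x - p) - ⟪x - p, u⟫ • u⟫ = ⟪e, x - p⟫ - ⟪e, u⟫ * ⟪x - p, u⟫ := by
    rw [inner_sub_right e (x - p), real_inner_smul_right, mul_comm]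
  rw [← h, mul_comm r]
  exact (abs_real_inner_le_norm _ _).trans (mul_le_mul_of_nonneg_left hx (norm_nonneg e))

theorem abs_inner_sub_le_of_mem_inter_solidCylinder {p₁ p₂ u₁ u₂ v x : E3} {r : ℝ}
    (hv₂ : ⟪v, u₂⟫ = 0) (hv₁ : ⟪v, u₁⟫ = ‖v‖ ^ 2) (hv : 0 < ‖v‖)
    (hx : x ∈ solidCylinder p₁ u₁ r ∩ solidCylinder p₂ u₂ r) :
    |⟪u₁, x - p₁⟫ - ⟪v, p₂ - p₁⟫ / ‖v‖ ^ 2| ≤ 2 * r / ‖v‖ := by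
  have h₁ := abs_inner_sub_le_of_mem_solidCylinder hx.1 v
  have h₂ := abs_inner_sub_le_of_mem_solidCylinder hx.2 v
  rw [hv₁, real_inner_comm u₁ (x - p₁)] at h₁
  rw [hv₂, zero_mul, sub_zero, ← sub_sub_sub_cancel_right x p₂ p₁, inner_sub_right] at h₂
  have key : |‖v‖ ^ 2 * ⟪u₁, x - p₁⟫ - ⟪v, p₂ - p₁⟫| ≤ 2 * r * ‖v‖ := by
    rw [abs_le] at h₁ h₂ ⊢
    constructor <;> linarith
  have hv2 : 0 < ‖v‖ ^ 2 := by positivity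
  calc |⟪u₁, x - p₁⟫ - ⟪v, p₂ - p₁⟫ / ‖v‖ ^ 2|
      = |‖v‖ ^ 2 * ⟪u₁, x - p₁⟫ - ⟪v, p₂ - p₁⟫| / ‖v‖ ^ 2 := by
        rw [eq_div_iff hv2.ne', ← abs_of_pos hv2, ← abs_mul, abs_of_pos hv2]
        congr 1
        field_simp
    _ ≤ 2 * r * ‖v‖ / ‖v‖ ^ 2 := by gcongr
    _ = 2 * r / ‖v‖ := by field_simp

theorem inter_solidCylinder_subset_box {p₁ p₂ u₁ u₂ v : E3} {r : ℝ}
    (hv₂ : ⟪v, u₂⟫ = 0) (hv₁ : ⟪v, u₁⟫ = ‖v‖ ^ 2) (hv : 0 < ‖v‖)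
    {b : OrthonormalBasis (Fin 3) ℝ E3} (hb : b 0 = u₁) :
    solidCylinder p₁ u₁ r ∩ solidCylinder p₂ u₂ r ⊆
      {x | ∀ i, |⟪b i, x - (p₁ + (⟪v, p₂ - p₁⟫ / ‖v‖ ^ 2) • u₁)⟫| ≤ ![2 * r / ‖v‖, r, r] i} := by
  intro x hx i
  rw [← sub_sub, inner_sub_right, real_inner_smul_right]
  induction i using Fin.cases with
  | zero =>
    rw [← hb, real_inner_self_eq_norm_sq, b.orthonormal.1, one_pow, mul_one, hb]
    exact abs_inner_sub_le_of_mem_inter_solidCylinder hv₂ hv₁ hv hx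
  | succ j =>
    have hperp : ⟪b j.succ, u₁⟫ = 0 := hb ▸ b.orthonormal.2 (Fin.succ_ne_zero j)
    have h := abs_inner_sub_le_of_mem_solidCylinder hx.1 (b j.succ)
    rw [hperp, zero_mul, sub_zero, b.orthonormal.1, mul_one] at h
    rw [hperp, mul_zero, sub_zero]
    fin_cases j <;> exact h

/-- **Volume bound for the intersection of two transverse tubes** (as in (4.22)):
there is an absolute constant `C` such that if `T₁, T₂` are solid circular cylinders of
radius `r` whose axes make an angle `θ ∈ (0, π/2]` (so that `sin θ` is the norm of the
component of one unit direction orthogonal to the other), then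
`|T₁ ∩ T₂| ≤ C r³ / sin θ`. -/
theorem transverse_cylinder_intersection_volume :
    ∃ C : ℝ, 0 < C ∧
      ∀ r : ℝ, 0 < r → ∀ p₁ p₂ u₁ u₂ : E3, ‖u₁‖ = 1 → ‖u₂‖ = 1 →
      ∀ θ : ℝ, θ ∈ Set.Ioc 0 (π / 2) →
        Real.sin θ = ‖u₁ - (inner ℝ u₁ u₂ : ℝ) • u₂‖ →
        volume (solidCylinder p₁ u₁ r ∩ solidCylinder p₂ u₂ r)
          ≤ ENNReal.ofReal (C * r ^ 3 / Real.sin θ) := by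
  refine ⟨16, by norm_num, fun r hr p₁ p₂ u₁ u₂ hu₁ hu₂ θ hθ hsin ↦ ?_⟩
  have hs : 0 < sin θ := sin_pos_of_pos_of_lt_pi hθ.1 (hθ.2.trans_lt (by linarith [pi_pos]))
  have hv₂ := inner_sub_inner_smul_eq_zero_of_norm_eq_one hu₂ u₁
  have hv₁ := inner_sub_inner_smul_left_eq_norm_sq_of_norm_eq_one hu₂ u₁
  obtain ⟨b, hb⟩ := exists_orthonormalBasis_apply_zero_eq finrank_euclideanSpace_fin hu₁
  calc volume (solidCylinder p₁ u₁ r ∩ solidCylinder p₂ u₂ r)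
      ≤ volume _ := measure_mono (inter_solidCylinder_subset_box hv₂ hv₁ (hsin ▸ hs) hb)
    _ = ∏ i, ENNReal.ofReal (2 * ![2 * r / sin θ, r, r] i) := by
      rw [b.volume_setOf_abs_inner_sub_le, hsin]
    _ = ENNReal.ofReal (16 * r ^ 3 / sin θ) := by
      simp only [Fin.prod_univ_three, Matrix.cons_val_zero, Matrix.cons_val_one, Matrix.cons_val]
      rw [← ENNReal.ofReal_mul' (by positivity), ← ENNReal.ofReal_mul' (by positivity)]
      congr 1
      field_simp
      ring
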